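/- arXiv:1912.10348 — 5 statements merged into one kernel-verified Lean document; each statement's English description precedes it below -/
import Mathlib

section
/- Let H be an n-dimensional complex Hilbert space, R : H → H a linear map, I = {1,...,m}, K = {0,...,k} with k ≥ n-1, and f_1,...,f_m ∈ H. If the family {R^j f_i : i ∈ I, j ∈ K} is a frame of H with frame bounds A, B > 0, then for every eigenvalue λ of the adjoint R*, the family {P_{E_λ} f_i : i ∈ I} is a frame of E_λ = ker(R* - λI) with frame bounds A/C_λ and B/C_λ, where C_λ = Σ_{j=0}^{k} |λ|^{2j} and P_{E_λ} is the orthogonal projection onto E_λ. -/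
open scoped InnerProductSpace
open Finset

/-!
If `R* x = λ x`, then `⟪x, R^j y⟫ = conj λ ^ j ⟪x, y⟫`, so for `x ∈ E_λ` the frame sum of the
iterates factors as `C_λ · Σ_i |⟪x, f_i⟫|²`; and `⟪x, f_i⟫ = ⟪x, P_{E_λ} f_i⟫` because `x ∈ E_λ`.
Dividing the frame inequalities for `x` by `C_λ > 0` gives the claim.
-/

section Iterates

variable {𝕜 E : Type*} [RCLike 𝕜] [NormedAddCommGroup E] [InnerProductSpace 𝕜 E]
  [FiniteDimensional 𝕜 E]

theorem inner_pow_apply_of_adjoint_apply_eq_smul {T : E →ₗ[𝕜] E} {x : E} {μ : 𝕜}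
    (hx : T.adjoint x = μ • x) (j : ℕ) (y : E) :
    ⟪x, (T ^ j) y⟫_𝕜 = starRingEnd 𝕜 μ ^ j * ⟪x, y⟫_𝕜 := by
  induction j generalizing y with
  | zero => simp
  | succ j ih =>
    rw [pow_succ, Module.End.mul_apply, ih, ← LinearMap.adjoint_inner_left, hx,
      inner_smul_left, pow_succ, mul_assoc]

theorem sum_sum_norm_inner_pow_apply_sq_of_adjoint_apply_eq_smul {ι : Type*} [Fintype ι]
    {T : E →ₗ[𝕜] E} {x : E} {μ : 𝕜} (hx : T.adjoint x = μ • x) (s : Finset ℕ) (f : ι → E) :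
    ∑ j ∈ s, ∑ i, ‖⟪x, (T ^ j) (f i)⟫_𝕜‖ ^ 2 =
      (∑ j ∈ s, ‖μ‖ ^ (2 * j)) * ∑ i, ‖⟪x, f i⟫_𝕜‖ ^ 2 := by
  simp_rw [Finset.sum_mul, Finset.mul_sum, inner_pow_apply_of_adjoint_apply_eq_smul hx,
    norm_mul, mul_pow, norm_pow, RCLike.norm_conj, ← pow_mul, mul_comm 2]

end Iterates

theorem stmt0_general {H : Type*} [NormedAddCommGroup H] [InnerProductSpace ℂ H]
    [FiniteDimensional ℂ H] (m k : ℕ) (R : H →ₗ[ℂ] H) (f : Fin m → H) (A B : ℝ)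
    (hframe : ∀ x : H,
      A * ‖x‖ ^ 2 ≤ ∑ j ∈ Finset.range (k + 1), ∑ i : Fin m,
          ‖⟪x, (R ^ j) (f i)⟫_ℂ‖ ^ 2 ∧
        ∑ j ∈ Finset.range (k + 1), ∑ i : Fin m, ‖⟪x, (R ^ j) (f i)⟫_ℂ‖ ^ 2
          ≤ B * ‖x‖ ^ 2) :
    ∀ lam : ℂ, Module.End.HasEigenvalue (LinearMap.adjoint R) lam →
      ∀ x ∈ LinearMap.ker (LinearMap.adjoint R - lam • LinearMap.id),
        A / (∑ j ∈ Finset.range (k + 1), ‖lam‖ ^ (2 * j)) * ‖x‖ ^ 2 ≤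
            ∑ i : Fin m, ‖⟪x, ((Submodule.orthogonalProjectionOnto
              (LinearMap.ker (LinearMap.adjoint R - lam • LinearMap.id)) (f i)) : H)⟫_ℂ‖ ^ 2 ∧
          ∑ i : Fin m, ‖⟪x, ((Submodule.orthogonalProjectionOnto
              (LinearMap.ker (LinearMap.adjoint R - lam • LinearMap.id)) (f i)) : H)⟫_ℂ‖ ^ 2
            ≤ B / (∑ j ∈ Finset.range (k + 1), ‖lam‖ ^ (2 * j)) * ‖x‖ ^ 2 := by
  intro lam _ x hx
  set E := LinearMap.ker (LinearMap.adjoint R - lam • LinearMap.id)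
  have hRx : LinearMap.adjoint R x = lam • x := by
    simpa [sub_eq_zero] using LinearMap.mem_ker.mp hx
  have hproj (i : Fin m) : ⟪x, (E.orthogonalProjectionOnto (f i) : H)⟫_ℂ = ⟪x, f i⟫_ℂ :=
    E.inner_orthogonalProjectionOnto_eq_of_mem_left ⟨x, hx⟩ (f i)
  have hC : 0 < ∑ j ∈ Finset.range (k + 1), ‖lam‖ ^ (2 * j) := by
    rw [Finset.sum_range_succ', mul_zero, pow_zero]
    positivity
  obtain ⟨hlower, hupper⟩ := hframe x
  rw [sum_sum_norm_inner_pow_apply_sq_of_adjoint_apply_eq_smul hRx] at hlower hupper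
  simp_rw [hproj, div_mul_eq_mul_div, div_le_iff₀ hC, le_div_iff₀ hC]
  exact ⟨by linarith, by linarith⟩

/-- If the iterates `{R^j f_i : i ∈ I, j ∈ K}` form a frame of the
`n`-dimensional Hilbert space `H` with bounds `A, B`, then for every eigenvalue `λ` of `R*`,
the projections `{P_{E_λ} f_i}` form a frame of `E_λ = ker(R* - λI)` with bounds
`A/C_λ` and `B/C_λ`, where `C_λ = Σ_{j=0}^k |λ|^{2j}`. -/
theorem stmt0 {H : Type*} [NormedAddCommGroup H] [InnerProductSpace ℂ H]
    [FiniteDimensional ℂ H] (n m k : ℕ) (hn : Module.finrank ℂ H = n)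
    (hk : n - 1 ≤ k) (R : H →ₗ[ℂ] H) (f : Fin m → H) (A B : ℝ)
    (hA : 0 < A) (hB : 0 < B)
    (hframe : ∀ x : H,
      A * ‖x‖ ^ 2 ≤ ∑ j ∈ Finset.range (k + 1), ∑ i : Fin m,
          ‖⟪x, (R ^ j) (f i)⟫_ℂ‖ ^ 2 ∧
        ∑ j ∈ Finset.range (k + 1), ∑ i : Fin m, ‖⟪x, (R ^ j) (f i)⟫_ℂ‖ ^ 2
          ≤ B * ‖x‖ ^ 2) :
    ∀ lam : ℂ, Module.End.HasEigenvalue (LinearMap.adjoint R) lam →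
      ∀ x ∈ LinearMap.ker (LinearMap.adjoint R - lam • LinearMap.id),
        A / (∑ j ∈ Finset.range (k + 1), ‖lam‖ ^ (2 * j)) * ‖x‖ ^ 2 ≤
            ∑ i : Fin m, ‖⟪x, ((Submodule.orthogonalProjectionOnto
              (LinearMap.ker (LinearMap.adjoint R - lam • LinearMap.id)) (f i)) : H)⟫_ℂ‖ ^ 2 ∧
          ∑ i : Fin m, ‖⟪x, ((Submodule.orthogonalProjectionOnto
              (LinearMap.ker (LinearMap.adjoint R - lam • LinearMap.id)) (f i)) : H)⟫_ℂ‖ ^ 2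
            ≤ B / (∑ j ∈ Finset.range (k + 1), ‖lam‖ ^ (2 * j)) * ‖x‖ ^ 2 :=
  stmt0_general m k R f A B hframe
end

section
/- Let λ_1,...,λ_r be distinct complex numbers with β = max_s |λ_s|, α = min_s Π_{u≠s} |λ_s-λ_u|². For k ≥ r-1, let M : ℂ^{m×r} → P_k^m be the Lagrange interpolation operator sending (w_{is})_{i,s} to the tuple of polynomials (p_i)_i of degree ≤ r-1 with p_i(λ_s) = w_{is}. Then ‖M‖ ≤ ((r/α) Σ_{u=0}^{r-1} binom(r-1, u)² β^{2u})^{1/2}, where P_k carries the coefficient inner product. -/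
open Finset Polynomial

/-!
Each Lagrange basis polynomial is `B_s = w_s * ∏_{u ≠ s} (X - λ_u)` with `‖w_s‖² ≤ α⁻¹`. By Vieta,
the `j`-th coefficient of the monic product is bounded by `binom(r-1, j) β^(r-1-j)`, so
`Σ_j ‖coeff_j B_s‖² ≤ α⁻¹ Σ_u binom(r-1, u)² β^(2u)`. Since `M` acts on each row `w_i` by the
coefficient matrix of the `B_s`, Cauchy–Schwarz bounds `‖M‖` by the Frobenius norm of that
matrix, the square root of `r` times this bound.
-/

theorem sum_range_sq_pow_mul_choose_le (n N : ℕ) (β : ℝ) :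
    ∑ j ∈ range N, (β ^ (n - j) * n.choose j) ^ 2 ≤
      ∑ u ∈ range (n + 1), (n.choose u : ℝ) ^ 2 * β ^ (2 * u) := by
  set f : ℕ → ℝ := fun j => (β ^ (n - j) * n.choose j) ^ 2
  have hf : ∀ j ∈ range (max N (n + 1)), j ∉ range (n + 1) → f j = 0 := by
    intro j _ hj
    simp [f, Nat.choose_eq_zero_of_lt (by simpa using hj : n < j)]
  calc ∑ j ∈ range N, f j ≤ ∑ j ∈ range (max N (n + 1)), f j :=
        sum_le_sum_of_subset_of_nonneg (range_mono (le_max_left _ _)) fun _ _ _ => sq_nonneg _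
    _ = ∑ j ∈ range (n + 1), f j := (sum_subset (range_mono (le_max_right _ _)) hf).symm
    _ = ∑ u ∈ range (n + 1), f (n - u) := by
        rw [← sum_range_reflect]; simp
    _ = _ := by
        refine sum_congr rfl fun u hu => ?_
        have hun : u ≤ n := Nat.lt_succ_iff.mp (mem_range.mp hu)
        simp only [f, Nat.sub_sub_self hun, Nat.choose_symm hun]
        ring

theorem norm_sum_mul_sq_le {𝕜 σ : Type*} [RCLike 𝕜] [Fintype σ] (a b : σ → 𝕜) :
    ‖∑ s, a s * b s‖ ^ 2 ≤ (∑ s, ‖a s‖ ^ 2) * ∑ s, ‖b s‖ ^ 2 := by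
  calc ‖∑ s, a s * b s‖ ^ 2 ≤ (∑ s, ‖a s‖ * ‖b s‖) ^ 2 := by
        gcongr
        exact (norm_sum_le _ _).trans_eq (by simp only [norm_mul])
    _ ≤ _ := sum_mul_sq_le_sq_mul_sq _ _ _

theorem opNorm_le_sqrt_sum_norm_sq {𝕜 ι σ κ : Type*} [RCLike 𝕜] [Fintype ι] [Fintype σ]
    [Fintype κ] (b : σ → κ → 𝕜)
    (M : EuclideanSpace 𝕜 (ι × σ) →L[𝕜] EuclideanSpace 𝕜 (ι × κ))
    (hM : ∀ w i j, M w (i, j) = ∑ s, w (i, s) * b s j) :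
    ‖M‖ ≤ √(∑ s, ∑ j, ‖b s j‖ ^ 2) := by
  refine M.opNorm_le_bound (Real.sqrt_nonneg _) fun w => ?_
  have hsq : ∑ p, ‖M w p‖ ^ 2 ≤ (∑ s, ∑ j, ‖b s j‖ ^ 2) * ∑ p, ‖w p‖ ^ 2 :=
    calc ∑ p, ‖M w p‖ ^ 2 = ∑ i, ∑ j, ‖∑ s, w (i, s) * b s j‖ ^ 2 := by
          simp only [Fintype.sum_prod_type, hM]
      _ ≤ ∑ i, ∑ j, (∑ s, ‖w (i, s)‖ ^ 2) * ∑ s, ‖b s j‖ ^ 2 := by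
          gcongr with i _ j _
          exact norm_sum_mul_sq_le _ _
      _ = (∑ i, ∑ s, ‖w (i, s)‖ ^ 2) * ∑ j, ∑ s, ‖b s j‖ ^ 2 := (sum_mul_sum _ _ _ _).symm
      _ = (∑ s, ∑ j, ‖b s j‖ ^ 2) * ∑ p, ‖w p‖ ^ 2 := by
          rw [sum_comm (s := univ (α := κ)), mul_comm, Fintype.sum_prod_type]
  rw [EuclideanSpace.norm_eq, EuclideanSpace.norm_eq, ← Real.sqrt_mul (by positivity)]
  exact Real.sqrt_le_sqrt hsq

namespace Lagrange

variable {K ι : Type*} [NormedField K]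

theorem roots_nodal (s : Finset ι) (v : ι → K) : (nodal s v).roots = s.val.map v := by
  simpa [nodal, Multiset.map_map, Function.comp_def] using
    roots_multiset_prod_X_sub_C (s.val.map v)

theorem norm_coeff_nodal_le (s : Finset ι) (v : ι → K) {β : ℝ} (hβ : ∀ i ∈ s, ‖v i‖ ≤ β)
    (j : ℕ) : ‖(nodal s v).coeff j‖ ≤ β ^ (#s - j) * (#s).choose j := by
  have hsplit : (nodal s v).Splits := Splits.prod fun i _ => Splits.X_sub_C (v i)
  have hroots : ∀ z ∈ (nodal s v).roots, ‖z‖ ≤ β := by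
    simp only [roots_nodal, Multiset.mem_map, Finset.mem_val]
    rintro _ ⟨i, hi, rfl⟩
    exact hβ i hi
  simpa [natDegree_nodal] using coeff_le_of_roots_le (f := RingHom.id K) j nodal_monic
    (by simpa using hsplit) (by simpa using hroots)

variable [DecidableEq ι]

theorem basis_eq_C_nodalWeight_mul_nodal_erase (s : Finset ι) (v : ι → K) (i : ι) :
    Lagrange.basis s v i = C (nodalWeight s v i) * nodal (s.erase i) v := by
  simp_rw [Lagrange.basis, basisDivisor, nodalWeight, prod_mul_distrib, map_prod, nodal]

theorem norm_nodalWeight_sq (s : Finset ι) (v : ι → K) (i : ι) :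
    ‖nodalWeight s v i‖ ^ 2 = (∏ j ∈ s.erase i, ‖v i - v j‖ ^ 2)⁻¹ := by
  simp [nodalWeight, norm_prod, prod_pow]

theorem sum_range_norm_coeff_basis_sq_le {s : Finset ι} {i : ι} (hi : i ∈ s) (v : ι → K)
    {β : ℝ} (hβ : ∀ j ∈ s, ‖v j‖ ≤ β) (N : ℕ) :
    ∑ j ∈ range N, ‖(Lagrange.basis s v i).coeff j‖ ^ 2 ≤
      ‖nodalWeight s v i‖ ^ 2 *
        ∑ u ∈ range #s, ((#s - 1).choose u : ℝ) ^ 2 * β ^ (2 * u) := by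
  have hcard : #(s.erase i) = #s - 1 := card_erase_of_mem hi
  have hs : #s - 1 + 1 = #s := Nat.sub_add_cancel (card_pos.mpr ⟨i, hi⟩)
  calc ∑ j ∈ range N, ‖(Lagrange.basis s v i).coeff j‖ ^ 2
      = ‖nodalWeight s v i‖ ^ 2 * ∑ j ∈ range N, ‖(nodal (s.erase i) v).coeff j‖ ^ 2 := by
        simp only [basis_eq_C_nodalWeight_mul_nodal_erase, coeff_C_mul, norm_mul, mul_pow,
          mul_sum]
    _ ≤ ‖nodalWeight s v i‖ ^ 2 *
          ∑ j ∈ range N, (β ^ (#s - 1 - j) * (#s - 1).choose j) ^ 2 := by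
        gcongr with j
        simpa [hcard] using norm_coeff_nodal_le (s.erase i) v
          (fun j hj => hβ j (mem_of_mem_erase hj)) j
    _ ≤ _ := by
        gcongr
        simpa only [hs] using sum_range_sq_pow_mul_choose_le (#s - 1) N β

end Lagrange

theorem stmt5_general (r m k : ℕ)
    (lam : Fin r → ℂ) (hlam : Function.Injective lam)
    (α β : ℝ)
    (hα : IsLeast
      (Set.range fun s : Fin r => ∏ u ∈ Finset.univ.erase s, ‖lam s - lam u‖ ^ 2) α)
    (hβ : IsGreatest (Set.range fun s : Fin r => ‖lam s‖) β)
    (M : EuclideanSpace ℂ (Fin m × Fin r) →L[ℂ] EuclideanSpace ℂ (Fin m × Fin (k + 1)))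
    (hM : ∀ (w : EuclideanSpace ℂ (Fin m × Fin r)) (i : Fin m) (j : Fin (k + 1)),
      M w (i, j) = ∑ s : Fin r, w (i, s) *
        (∏ u ∈ Finset.univ.erase s,
          (Polynomial.C (lam s - lam u)⁻¹ * (Polynomial.X - Polynomial.C (lam u)))).coeff
            (j : ℕ)) :
    ‖M‖ ≤ Real.sqrt ((r / α) *
      ∑ u ∈ Finset.range r, ((r - 1).choose u : ℝ) ^ 2 * β ^ (2 * u)) := by
  set S := ∑ u ∈ range r, ((r - 1).choose u : ℝ) ^ 2 * β ^ (2 * u)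
  have hα_pos : 0 < α := by
    obtain ⟨s, rfl⟩ := hα.1
    exact prod_pos fun u hu => pow_pos (norm_pos_iff.mpr
      (sub_ne_zero.mpr (hlam.ne (ne_of_mem_erase hu).symm))) 2
  have hbasis : ∀ s : Fin r,
      ∑ j : Fin (k + 1), ‖(Lagrange.basis univ lam s).coeff j‖ ^ 2 ≤ α⁻¹ * S := by
    intro s
    rw [Fin.sum_univ_eq_sum_range (fun j => ‖(Lagrange.basis univ lam s).coeff j‖ ^ 2)]
    refine (Lagrange.sum_range_norm_coeff_basis_sq_le (mem_univ s) lam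
      (fun u _ => hβ.2 ⟨u, rfl⟩) (k + 1)).trans ?_
    rw [Lagrange.norm_nodalWeight_sq, card_univ, Fintype.card_fin]
    gcongr
    · exact sum_nonneg fun u _ => by rw [pow_mul']; positivity
    · exact hα.2 ⟨s, rfl⟩
  calc ‖M‖ ≤ √(∑ s, ∑ j : Fin (k + 1), ‖(Lagrange.basis univ lam s).coeff j‖ ^ 2) :=
        -- the product in `hM` is `Lagrange.basis univ lam s` unfolded
        opNorm_le_sqrt_sum_norm_sq _ M hM
    _ ≤ √(∑ _s : Fin r, α⁻¹ * S) := Real.sqrt_le_sqrt (sum_le_sum fun s _ => hbasis s)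
    _ = √(r / α * S) := by
        rw [sum_const, card_univ, Fintype.card_fin, nsmul_eq_mul, div_eq_mul_inv, mul_assoc]

/-- For distinct `λ_1,…,λ_r` with `β = max_s |λ_s|` and
`α = min_s Π_{u≠s}|λ_s-λ_u|²`, and `k ≥ r-1`, the Lagrange interpolation operator
`M : ℂ^{m×r} → P_k^m`, `M(w)_i = Σ_s w_{is} B_s` (so that `M(w)_i(λ_s) = w_{is}`),
satisfies `‖M‖ ≤ ((r/α) Σ_{u=0}^{r-1} binom(r-1,u)² β^{2u})^{1/2}`.
`P_k^m` with the coefficient inner product is modelled as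
`EuclideanSpace ℂ (Fin m × Fin (k+1))`. -/
theorem stmt5 (r m k : ℕ) (hr : 0 < r) (hk : r - 1 ≤ k)
    (lam : Fin r → ℂ) (hlam : Function.Injective lam)
    (α β : ℝ)
    (hα : IsLeast
      (Set.range fun s : Fin r => ∏ u ∈ Finset.univ.erase s, ‖lam s - lam u‖ ^ 2) α)
    (hβ : IsGreatest (Set.range fun s : Fin r => ‖lam s‖) β)
    (M : EuclideanSpace ℂ (Fin m × Fin r) →L[ℂ] EuclideanSpace ℂ (Fin m × Fin (k + 1)))
    (hM : ∀ (w : EuclideanSpace ℂ (Fin m × Fin r)) (i : Fin m) (j : Fin (k + 1)),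
      M w (i, j) = ∑ s : Fin r, w (i, s) *
        (∏ u ∈ Finset.univ.erase s,
          (Polynomial.C (lam s - lam u)⁻¹ * (Polynomial.X - Polynomial.C (lam u)))).coeff
            (j : ℕ)) :
    ‖M‖ ≤ Real.sqrt ((r / α) *
      ∑ u ∈ Finset.range r, ((r - 1).choose u : ℝ) ^ 2 * β ^ (2 * u)) :=
  stmt5_general r m k lam hlam α β hα hβ M hM
end

section
/- Let λ_1,...,λ_r be distinct complex numbers with β = max_s |λ_s| and α = min_s Π_{u≠s} |λ_s-λ_u|². Then each Lagrange basis polynomial B_s(z) = Π_{u≠s} (z-λ_u)/(λ_s-λ_u) satisfies ‖B_s‖² ≤ (1/α)(1+β)^{2r}, where ‖·‖ is the coefficient ℓ² norm on polynomials, and consequently the Lagrange interpolation operator M : ℂ^{m×r} → P_k^m satisfies ‖M‖ ≤ (r/α)^{1/2} (1+β)^r. -/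
/-!
Write `B_s = c_s · ∏_{u ≠ s} (X - λ_u)` with `|c_s|² = 1 / ∏_{u ≠ s} |λ_s - λ_u|² ≤ 1 / α`.
The coefficients of `∏ (X - λ_u)` are dominated in absolute value by those of `∏ (X + |λ_u|)`,
whose coefficient sum is its value `∏ (1 + |λ_u|) ≤ (1 + β)^r` at `1`; since the ℓ² norm is at
most the ℓ¹ norm, `‖B_s‖² ≤ (1 / α) (1 + β)^{2r}`. Cauchy–Schwarz bounds the operator norm of `M`
by the Frobenius norm of its coefficient array, i.e. by `(∑_s ‖B_s‖²)^{1/2}`.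
-/

open Finset Polynomial

namespace Polynomial

variable {R : Type*} [SeminormedRing R]

theorem norm_coeff_mul_le_coeff_mul {p q : R[X]} {P Q : ℝ[X]}
    (hp : ∀ i, ‖p.coeff i‖ ≤ P.coeff i) (hq : ∀ i, ‖q.coeff i‖ ≤ Q.coeff i) (n : ℕ) :
    ‖(p * q).coeff n‖ ≤ (P * Q).coeff n := by
  rw [coeff_mul, coeff_mul]
  refine (norm_sum_le _ _).trans (sum_le_sum fun x _ => ?_)
  exact (norm_mul_le _ _).trans
    (mul_le_mul (hp _) (hq _) (norm_nonneg _) ((norm_nonneg _).trans (hp _)))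

theorem norm_coeff_X_sub_C_le [NormOneClass R] (a : R) (n : ℕ) :
    ‖(X - C a).coeff n‖ ≤ (X + C ‖a‖).coeff n := by
  rcases n with _ | _ | n <;> simp [coeff_X, coeff_C]

theorem norm_coeff_prod_X_sub_C_le {R ι : Type*} [SeminormedCommRing R] [NormOneClass R]
    (s : Finset ι) (a : ι → R) (n : ℕ) :
    ‖(∏ u ∈ s, (X - C (a u))).coeff n‖ ≤ (∏ u ∈ s, (X + C ‖a u‖)).coeff n := by
  classical
  induction s using Finset.induction generalizing n with
  | empty => rcases n with _ | n <;> simp [coeff_one]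
  | insert b s hb ih =>
    rw [prod_insert hb, prod_insert hb]
    exact norm_coeff_mul_le_coeff_mul (norm_coeff_X_sub_C_le (a b)) ih n

theorem sum_range_norm_coeff_le_eval_one {q : R[X]} {P : ℝ[X]}
    (h : ∀ i, ‖q.coeff i‖ ≤ P.coeff i) (N : ℕ) :
    ∑ j ∈ range N, ‖q.coeff j‖ ≤ P.eval 1 := by
  have hP : P.eval 1 = ∑ j ∈ range (max N (P.natDegree + 1)), P.coeff j := by
    simp [eval_eq_sum_range' (lt_of_lt_of_le (Nat.lt_succ_self _) (le_max_right N _))]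
  rw [hP]
  calc ∑ j ∈ range N, ‖q.coeff j‖ ≤ ∑ j ∈ range N, P.coeff j := sum_le_sum fun j _ => h j
    _ ≤ _ := sum_le_sum_of_subset_of_nonneg (range_subset_range.2 (le_max_left _ _))
        fun j _ _ => (norm_nonneg _).trans (h j)

theorem sum_range_norm_coeff_prod_X_sub_C_le {R ι : Type*} [SeminormedCommRing R] [NormOneClass R]
    (s : Finset ι) (a : ι → R) (N : ℕ) :
    ∑ j ∈ range N, ‖(∏ u ∈ s, (X - C (a u))).coeff j‖ ≤ ∏ u ∈ s, (1 + ‖a u‖) := by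
  simpa [eval_prod] using sum_range_norm_coeff_le_eval_one (norm_coeff_prod_X_sub_C_le s a) N

end Polynomial

namespace Lagrange

variable {F ι : Type*} [NormedField F] [DecidableEq ι]

theorem basis_eq_C_mul_prod (s : Finset ι) (v : ι → F) (i : ι) :
    Lagrange.basis s v i =
      C (∏ u ∈ s.erase i, (v i - v u)⁻¹) * ∏ u ∈ s.erase i, (X - C (v u)) := by
  rw [map_prod, ← prod_mul_distrib]
  rfl

theorem sum_range_norm_sq_coeff_basis_le (s : Finset ι) (v : ι → F) (i : ι) (N : ℕ) :
    ∑ j ∈ range N, ‖(Lagrange.basis s v i).coeff j‖ ^ 2 ≤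
      (∏ u ∈ s.erase i, ‖v i - v u‖ ^ 2)⁻¹ * (∏ u ∈ s.erase i, (1 + ‖v u‖)) ^ 2 := by
  set c := ∏ u ∈ s.erase i, (v i - v u)⁻¹
  have hc : ‖c‖ ^ 2 = (∏ u ∈ s.erase i, ‖v i - v u‖ ^ 2)⁻¹ := by
    simp only [c, norm_prod, norm_inv, ← prod_pow, inv_pow, prod_inv_distrib]
  simp only [basis_eq_C_mul_prod, coeff_C_mul, norm_mul, mul_pow, ← mul_sum, ← hc]
  gcongr
  exact (sum_sq_le_sq_sum_of_nonneg fun _ _ => norm_nonneg _).trans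
    (pow_le_pow_left₀ (sum_nonneg fun _ _ => norm_nonneg _)
      (sum_range_norm_coeff_prod_X_sub_C_le _ _ N) 2)

variable [Fintype ι] {v : ι → F} {α β : ℝ}

theorem pos_of_isLeast_prod_norm_sub_sq (hv : Function.Injective v)
    (hα : IsLeast (Set.range fun i => ∏ u ∈ univ.erase i, ‖v i - v u‖ ^ 2) α) : 0 < α := by
  obtain ⟨i, rfl⟩ := hα.1
  exact prod_pos fun u hu =>
    pow_pos (norm_pos_iff.2 (sub_ne_zero.2 (hv.ne (ne_of_mem_erase hu).symm))) 2

theorem sum_range_norm_sq_coeff_basis_le_of_isLeast_of_isGreatest (hv : Function.Injective v)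
    (hα : IsLeast (Set.range fun i => ∏ u ∈ univ.erase i, ‖v i - v u‖ ^ 2) α)
    (hβ : IsGreatest (Set.range fun i => ‖v i‖) β) (i : ι) (N : ℕ) :
    ∑ j ∈ range N, ‖(Lagrange.basis univ v i).coeff j‖ ^ 2 ≤
      1 / α * (1 + β) ^ (2 * Fintype.card ι) := by
  have hα₀ : 0 < α := pos_of_isLeast_prod_norm_sub_sq hv hα
  have hβ₀ : 0 ≤ β := (norm_nonneg _).trans (hβ.2 ⟨i, rfl⟩)
  have hnodes : ∏ u ∈ univ.erase i, (1 + ‖v u‖) ≤ (1 + β) ^ Fintype.card ι :=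
    calc ∏ u ∈ univ.erase i, (1 + ‖v u‖) ≤ ∏ _u ∈ univ.erase i, (1 + β) :=
          prod_le_prod (fun _ _ => by positivity) fun u _ => by linarith [hβ.2 ⟨u, rfl⟩]
      _ ≤ (1 + β) ^ Fintype.card ι := by
          rw [prod_const]
          exact pow_le_pow_right₀ (by linarith) (card_le_univ _)
  refine (sum_range_norm_sq_coeff_basis_le _ v i N).trans ?_
  rw [pow_mul', one_div]
  exact mul_le_mul (inv_anti₀ hα₀ (hα.2 ⟨i, rfl⟩))
    (pow_le_pow_left₀ (by positivity) hnodes 2) (by positivity) (by positivity)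

end Lagrange

theorem norm_sum_mul_sq_le_s6 {R ι : Type*} [SeminormedRing R] (s : Finset ι) (f g : ι → R) :
    ‖∑ i ∈ s, f i * g i‖ ^ 2 ≤ (∑ i ∈ s, ‖f i‖ ^ 2) * ∑ i ∈ s, ‖g i‖ ^ 2 :=
  (pow_le_pow_left₀ (norm_nonneg _)
    ((norm_sum_le _ _).trans (sum_le_sum fun i _ => norm_mul_le (f i) (g i))) 2).trans
    (sum_mul_sq_le_sq_mul_sq s _ _)

theorem ContinuousLinearMap.opNorm_le_sqrt_sum_norm_sq_of_apply_eq_sum_mul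
    {𝕜 μ ι κ : Type*} [RCLike 𝕜] [Fintype μ] [Fintype ι] [Fintype κ] (b : ι → κ → 𝕜)
    (M : EuclideanSpace 𝕜 (μ × ι) →L[𝕜] EuclideanSpace 𝕜 (μ × κ))
    (hM : ∀ w i j, M w (i, j) = ∑ s, w (i, s) * b s j) :
    ‖M‖ ≤ √(∑ s, ∑ j, ‖b s j‖ ^ 2) := by
  refine M.opNorm_le_bound (Real.sqrt_nonneg _) fun w => ?_
  rw [← sq_le_sq₀ (norm_nonneg _) (by positivity), mul_pow, Real.sq_sqrt (by positivity),
    EuclideanSpace.norm_sq_eq, EuclideanSpace.norm_sq_eq]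
  calc ∑ x, ‖M w x‖ ^ 2 = ∑ i, ∑ j, ‖∑ s, w (i, s) * b s j‖ ^ 2 := by
        simp only [Fintype.sum_prod_type, hM]
    _ ≤ ∑ i, ∑ j, (∑ s, ‖w (i, s)‖ ^ 2) * ∑ s, ‖b s j‖ ^ 2 := by
        gcongr with i _ j _
        exact norm_sum_mul_sq_le_s6 _ _ _
    _ = (∑ s, ∑ j, ‖b s j‖ ^ 2) * ∑ x, ‖w x‖ ^ 2 := by
        simp only [← mul_sum, ← sum_mul, Fintype.sum_prod_type, mul_comm, sum_comm (γ := κ)]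

theorem stmt6_general (r m k : ℕ)
    (lam : Fin r → ℂ) (hlam : Function.Injective lam)
    (α β : ℝ)
    (hα : IsLeast
      (Set.range fun s : Fin r => ∏ u ∈ Finset.univ.erase s, ‖lam s - lam u‖ ^ 2) α)
    (hβ : IsGreatest (Set.range fun s : Fin r => ‖lam s‖) β)
    (M : EuclideanSpace ℂ (Fin m × Fin r) →L[ℂ] EuclideanSpace ℂ (Fin m × Fin (k + 1)))
    (hM : ∀ (w : EuclideanSpace ℂ (Fin m × Fin r)) (i : Fin m) (j : Fin (k + 1)),
      M w (i, j) = ∑ s : Fin r, w (i, s) *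
        (∏ u ∈ Finset.univ.erase s,
          (Polynomial.C (lam s - lam u)⁻¹ * (Polynomial.X - Polynomial.C (lam u)))).coeff
            (j : ℕ)) :
    (∀ s : Fin r,
      ∑ j ∈ Finset.range r, ‖
          ((∏ u ∈ Finset.univ.erase s,
            (Polynomial.C (lam s - lam u)⁻¹ * (Polynomial.X - Polynomial.C (lam u)))).coeff j)‖ ^ 2
        ≤ (1 / α) * (1 + β) ^ (2 * r)) ∧
    ‖M‖ ≤ Real.sqrt (r / α) * (1 + β) ^ r := by
  -- `Lagrange.basis univ lam s` unfolds to the product `B_s` spelled out in the statement.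
  have hbasis (s : Fin r) (N : ℕ) :
      ∑ j ∈ range N, ‖(Lagrange.basis univ lam s).coeff j‖ ^ 2 ≤ 1 / α * (1 + β) ^ (2 * r) := by
    simpa using Lagrange.sum_range_norm_sq_coeff_basis_le_of_isLeast_of_isGreatest hlam hα hβ s N
  refine ⟨fun s => hbasis s r, ?_⟩
  have hβ₀ : 0 ≤ β := by
    obtain ⟨s, rfl⟩ := hβ.1
    exact norm_nonneg _
  calc ‖M‖ ≤ √(∑ s, ∑ j : Fin (k + 1), ‖(Lagrange.basis univ lam s).coeff j‖ ^ 2) :=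
        M.opNorm_le_sqrt_sum_norm_sq_of_apply_eq_sum_mul _ hM
    _ ≤ √(∑ _s : Fin r, 1 / α * (1 + β) ^ (2 * r)) := by
        gcongr with s
        simpa only [Fin.sum_univ_eq_sum_range (fun j => ‖(Lagrange.basis univ lam s).coeff j‖ ^ 2)]
          using hbasis s (k + 1)
    _ = √(r / α) * (1 + β) ^ r := by
        rw [sum_const, card_univ, Fintype.card_fin, nsmul_eq_mul, pow_mul', ← mul_assoc,
          ← div_eq_mul_one_div, Real.sqrt_mul' _ (by positivity), Real.sqrt_sq (by positivity)]

/-- For distinct `λ_1,…,λ_r` with `β = max_s |λ_s|` and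
`α = min_s Π_{u≠s}|λ_s-λ_u|²`: each Lagrange basis polynomial
`B_s(z) = Π_{u≠s}(z-λ_u)/(λ_s-λ_u)` satisfies `‖B_s‖² ≤ (1/α)(1+β)^{2r}` in the
coefficient ℓ² norm, and consequently the Lagrange interpolation operator
`M : ℂ^{m×r} → P_k^m` (with `k ≥ r-1`) satisfies `‖M‖ ≤ (r/α)^{1/2}(1+β)^r`. -/
theorem stmt6 (r m k : ℕ) (hr : 0 < r) (hk : r - 1 ≤ k)
    (lam : Fin r → ℂ) (hlam : Function.Injective lam)
    (α β : ℝ)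
    (hα : IsLeast
      (Set.range fun s : Fin r => ∏ u ∈ Finset.univ.erase s, ‖lam s - lam u‖ ^ 2) α)
    (hβ : IsGreatest (Set.range fun s : Fin r => ‖lam s‖) β)
    (M : EuclideanSpace ℂ (Fin m × Fin r) →L[ℂ] EuclideanSpace ℂ (Fin m × Fin (k + 1)))
    (hM : ∀ (w : EuclideanSpace ℂ (Fin m × Fin r)) (i : Fin m) (j : Fin (k + 1)),
      M w (i, j) = ∑ s : Fin r, w (i, s) *
        (∏ u ∈ Finset.univ.erase s,
          (Polynomial.C (lam s - lam u)⁻¹ * (Polynomial.X - Polynomial.C (lam u)))).coeff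
            (j : ℕ)) :
    (∀ s : Fin r,
      ∑ j ∈ Finset.range r, ‖
          ((∏ u ∈ Finset.univ.erase s,
            (Polynomial.C (lam s - lam u)⁻¹ * (Polynomial.X - Polynomial.C (lam u)))).coeff j)‖ ^ 2
        ≤ (1 / α) * (1 + β) ^ (2 * r)) ∧
    ‖M‖ ≤ Real.sqrt (r / α) * (1 + β) ^ r :=
  stmt6_general r m k lam hlam α β hα hβ M hM
end

section
/- Let V be a finitely generated shift-invariant subspace of L²(ℝ^d) and L : V → V a bounded, normal, shift-preserving operator. If Λ_a (with a of bounded spectrum) is an s-eigenvalue of L, i.e., V_a = ker(L - Λ_a) ≠ {0}, then Λ_a* = Λ_b (with b(j) = conj(a(-j))) is an s-eigenvalue of L* and ker(L* - Λ_b) = V_a. -/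
/-!
Both `Λ_a = ∑ a j • T_j` and `Λ_b = ∑ conj (a (-j)) • T_j` converge strongly, and since the
translations are unitary with `T_j* = T_{-j}`, reindexing `j ↦ -j` gives `Λ_a* = Λ_b`.
An operator commuting with every `T_j` commutes with any such series; applied to `Λ_b` this
makes `Λ_a` normal, and applied to `L` it gives `L Λ_a* = Λ_a* L`. Hence `L - Λ_a` is normal, and
a normal operator has the same kernel as its adjoint `L* - Λ_b`.
-/

open MeasureTheory
open scoped FourierTransform InnerProductSpace

noncomputable section

/-- Euclidean space `ℝ^d`. -/
abbrev Rd (d : ℕ) : Type := EuclideanSpace ℝ (Fin d)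

/-- The integer vector `k ∈ ℤ^d` viewed inside `ℝ^d`. -/
def intVec {d : ℕ} (k : Fin d → ℤ) : Rd d := WithLp.toLp 2 (fun i => (k i : ℝ))

/-- `ℓ²(ℤ^d)`. -/
abbrev l2Z (d : ℕ) : Type := lp (fun _ : Fin d → ℤ => ℂ) 2

/-- `L²(ℝ^d)`. -/
abbrev H2 (d : ℕ) : Type := Lp ℂ 2 (volume : Measure (Rd d))

/-- Lebesgue measure restricted to the fundamental domain `[0,1)^d`. -/
def boxMeasure (d : ℕ) : Measure (Rd d) :=
  (volume : Measure (Rd d)).restrict {ω : Rd d | ∀ i, ω i ∈ Set.Ico (0 : ℝ) 1}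

/-- The character `e_k(ω) = e^{-2πi⟨ω,k⟩}`. -/
def eChar {d : ℕ} (k : Fin d → ℤ) (ω : Rd d) : ℂ :=
  Complex.exp (-2 * Real.pi * Complex.I * (∑ i, (ω i : ℂ) * (k i : ℂ)))

/-- The fiberization setup on `L²(ℝ^d)`: the integer translation operators `Tr k`
and the fiberization isometric isomorphism
`T : L²(ℝ^d) ≃ L²([0,1)^d, ℓ²(ℤ^d))`, `Tf(ω) = (f̂(ω+k))_k`,
together with its defining (Fourier) property and the modulation property. -/
structure Fiberization (d : ℕ) where
  Tr : (Fin d → ℤ) → (H2 d ≃ₗᵢ[ℂ] H2 d)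
  hTr : ∀ (k : Fin d → ℤ) (f : H2 d),
    (Tr k f : Rd d → ℂ) =ᵐ[volume] fun x => f (x - intVec k)
  T : H2 d ≃ₗᵢ[ℂ] Lp (l2Z d) 2 (boxMeasure d)
  hT_four : ∀ (f : Rd d → ℂ) (hf1 : Integrable f (volume : Measure (Rd d)))
      (hf2 : MemLp f 2 (volume : Measure (Rd d))),
    ∀ᵐ ω ∂(boxMeasure d), ∀ k : Fin d → ℤ,
      (T (hf2.toLp f) : Rd d → l2Z d) ω k = 𝓕 f (ω + intVec k)
  hT_mod : ∀ (k : Fin d → ℤ) (f : H2 d),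
    ∀ᵐ ω ∂(boxMeasure d),
      (T (Tr k f) : Rd d → l2Z d) ω = eChar k ω • (T f : Rd d → l2Z d) ω


namespace ContinuousLinearMap

section Normed

variable {ι 𝕜 E : Type*} [NormedField 𝕜] [NormedAddCommGroup E] [NormedSpace 𝕜 E]

theorem commute_of_hasSum {U : ι → E →L[𝕜] E} {c : ι → 𝕜} {A M : E →L[𝕜] E}
    (hA : ∀ x, HasSum (fun j => c j • U j x) (A x)) (hM : ∀ j, Commute M (U j)) :
    Commute M A := by
  ext x
  have h := (hA x).mapL M
  simp only [map_smul, ← mul_apply_eq_comp, (hM _).eq] at h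
  exact h.unique (hA (M x))

theorem hasSum_restrict {V : Submodule 𝕜 E} {U : ι → E →L[𝕜] E} (hU : ∀ j, ∀ x ∈ V, U j x ∈ V)
    {c : ι → 𝕜} {A : E →L[𝕜] E} (hA : ∀ x, HasSum (fun j => c j • U j x) (A x))
    {AV : V →L[𝕜] V} (hAV : ∀ x : V, (AV x : E) = A x) (x : V) :
    HasSum (fun j => c j • (U j).restrict (hU j) x) (AV x) := by
  rw [← V.isEmbedding_subtype.isInducing.hasSum_iff]
  simpa [Function.comp_def, hAV] using hA x

theorem commute_restrict {V : Submodule 𝕜 E} {S T : E →L[𝕜] E} (hST : Commute S T)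
    (hS : ∀ x ∈ V, S x ∈ V) (hT : ∀ x ∈ V, T x ∈ V) :
    Commute (S.restrict hS) (T.restrict hT) := by
  ext x
  exact DFunLike.congr_fun hST.eq (x : E)

end Normed

section InnerProduct

variable {ι 𝕜 E : Type*} [RCLike 𝕜] [NormedAddCommGroup E] [InnerProductSpace 𝕜 E]
  [CompleteSpace E]

open scoped ComplexConjugate

theorem adjoint_restrict {V : Submodule 𝕜 E} [CompleteSpace V] {T T' : E →L[𝕜] E}
    (hTT' : adjoint T = T') (hT : ∀ x ∈ V, T x ∈ V) (hT' : ∀ x ∈ V, T' x ∈ V) :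
    adjoint (T.restrict hT) = T'.restrict hT' := by
  subst hTT'
  refine ((eq_adjoint_iff _ _).2 fun x y => ?_).symm
  simp only [Submodule.coe_inner, coe_restrict_apply]
  exact adjoint_inner_left T (y : E) (x : E)

theorem adjoint_eq_of_hasSum [AddGroup ι] {U : ι → E →L[𝕜] E}
    (hU : ∀ j, adjoint (U j) = U (-j)) {c : ι → 𝕜} {A B : E →L[𝕜] E}
    (hA : ∀ x, HasSum (fun j => c j • U j x) (A x))
    (hB : ∀ x, HasSum (fun j => conj (c (-j)) • U j x) (B x)) :
    adjoint A = B := by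
  refine ((eq_adjoint_iff B A).2 fun x y => ?_).symm
  have hAy : HasSum (fun j => c j * ⟪x, U j y⟫_𝕜) ⟪x, A y⟫_𝕜 := by
    simpa only [innerSL_apply_apply, inner_smul_right] using (hA y).mapL (innerSL 𝕜 x)
  have hBx : HasSum (fun j => c (-j) * ⟪x, U (-j) y⟫_𝕜) ⟪B x, y⟫_𝕜 := by
    have h := (hB x).mapL (innerSLFlip 𝕜 y)
    simp only [innerSLFlip_apply_apply, inner_smul_left, RCLike.conj_conj] at h
    simpa only [← adjoint_inner_right, hU] using h
  exact hBx.unique ((Equiv.neg ι).hasSum_iff.2 hAy)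

end InnerProduct

end ContinuousLinearMap

namespace Fiberization

variable {d : ℕ} (F : Fiberization d)

theorem Tr_Tr (j k : Fin d → ℤ) (f : H2 d) : F.Tr j (F.Tr k f) = F.Tr (j + k) f := by
  have hshift : ∀ x : Rd d, x - intVec j - intVec k = x - intVec (j + k) := fun x => by
    rw [sub_sub]; congr 1; ext i; simp [intVec]
  refine Lp.ext ((F.hTr j _).trans ?_ |>.trans (F.hTr (j + k) f).symm)
  refine ((measurePreserving_sub_right volume (intVec j)).quasiMeasurePreserving.ae_eq_comp
    (F.hTr k f)).trans (Filter.Eventually.of_forall fun x => ?_)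
  simp only [Function.comp_apply, hshift]

theorem Tr_zero (f : H2 d) : F.Tr 0 f = f := by
  have h0 : intVec (0 : Fin d → ℤ) = 0 := by ext i; simp [intVec]
  exact Lp.ext (by simpa [h0] using F.hTr 0 f)

theorem Tr_symm (j : Fin d → ℤ) : (F.Tr j).symm = F.Tr (-j) := by
  ext f : 1
  rw [LinearIsometryEquiv.symm_apply_eq, Tr_Tr, add_neg_cancel, Tr_zero]

theorem adjoint_Tr (j : Fin d → ℤ) :
    ContinuousLinearMap.adjoint (F.Tr j : H2 d →L[ℂ] H2 d) = F.Tr (-j) := by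
  rw [LinearIsometryEquiv.adjoint_eq_symm, Tr_symm]

theorem commute_Tr (j k : Fin d → ℤ) :
    Commute (F.Tr j : H2 d →L[ℂ] H2 d) (F.Tr k : H2 d →L[ℂ] H2 d) := by
  ext f : 1
  change F.Tr j (F.Tr k f) = F.Tr k (F.Tr j f)
  rw [Tr_Tr, Tr_Tr, add_comm]

end Fiberization

open ContinuousLinearMap

theorem stmt13_general (d : ℕ) (F : Fiberization d)
    (V : Submodule ℂ (H2 d)) [CompleteSpace V]
    (hVinv : ∀ (k : Fin d → ℤ) (f : H2 d), f ∈ V → F.Tr k f ∈ V)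
    (L : V →L[ℂ] V) (hnormal : IsStarNormal L)
    (hLsp : ∀ (k : Fin d → ℤ) (f g : V), (g : H2 d) = F.Tr k (f : H2 d) →
      ((L g : V) : H2 d) = F.Tr k ((L f : V) : H2 d))
    (a : (Fin d → ℤ) → ℂ)
    (La : H2 d →L[ℂ] H2 d)
    (hLa : ∀ f : H2 d, HasSum (fun j : Fin d → ℤ => a j • F.Tr j f) (La f))
    (LaV : V →L[ℂ] V) (hLaV : ∀ f : V, ((LaV f : V) : H2 d) = La (f : H2 d))
    (hseig : LinearMap.ker ((L - LaV : V →L[ℂ] V) : V →ₗ[ℂ] V) ≠ ⊥)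
    (Lb : H2 d →L[ℂ] H2 d)
    (hLb : ∀ f : H2 d,
      HasSum (fun j : Fin d → ℤ => (starRingEnd ℂ) (a (-j)) • F.Tr j f) (Lb f))
    (LbV : V →L[ℂ] V) (hLbV : ∀ f : V, ((LbV f : V) : H2 d) = Lb (f : H2 d)) :
    LinearMap.ker ((ContinuousLinearMap.adjoint L - LbV : V →L[ℂ] V) : V →ₗ[ℂ] V) =
      LinearMap.ker ((L - LaV : V →L[ℂ] V) : V →ₗ[ℂ] V) ∧
      LinearMap.ker ((ContinuousLinearMap.adjoint L - LbV : V →L[ℂ] V) : V →ₗ[ℂ] V) ≠ ⊥ := by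
  let T k : H2 d →L[ℂ] H2 d := F.Tr k
  let U k := (T k).restrict (hVinv k)
  have hA := hasSum_restrict (U := T) hVinv hLa hLaV
  have hB := hasSum_restrict (U := T) hVinv hLb hLbV
  have hUU : ∀ j k, Commute (U j) (U k) := fun j k => commute_restrict (F.commute_Tr j k) _ _
  have hLU : ∀ j, Commute L (U j) := fun j => ext fun f => Subtype.ext (hLsp j f _ rfl)
  have hLaU : ∀ j, Commute LaV (U j) := fun j => (commute_of_hasSum hA (hUU j)).symm
  have hadj : adjoint LaV = LbV :=
    adjoint_eq_of_hasSum (fun j => adjoint_restrict (F.adjoint_Tr j) _ _) hA hB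
  have hLa_normal : IsStarNormal LaV :=
    ⟨by rw [star_eq_adjoint, hadj]; exact (commute_of_hasSum hB hLaU).symm⟩
  have hL_star : Commute L (star LaV) := by
    rw [star_eq_adjoint, hadj]; exact commute_of_hasSum hB hLU
  have hdiff_normal : IsStarNormal (L - LaV) :=
    Commute.isStarNormal_sub (a := L) (b := LaV) (ha := hnormal) hL_star
  have hker : LinearMap.ker ((adjoint L - LbV : V →L[ℂ] V) : V →ₗ[ℂ] V) =
      LinearMap.ker ((L - LaV : V →L[ℂ] V) : V →ₗ[ℂ] V) := by
    rw [← hadj, ← LinearIsometryEquiv.map_sub]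
    exact hdiff_normal.ker_adjoint_eq_ker
  exact ⟨hker, hker ▸ hseig⟩

/-- Let `V` be a finitely generated shift-invariant subspace of `L²(ℝ^d)`
and `L : V → V` a bounded, normal, shift-preserving operator.  If `Λ_a` (with `a` of
bounded spectrum) is an s-eigenvalue of `L`, i.e. `V_a = ker(L - Λ_a) ≠ {0}`, then
`Λ_a* = Λ_b` (with `b(j) = conj(a(-j))`) is an s-eigenvalue of `L*` and
`ker(L* - Λ_b) = V_a`. -/
theorem stmt13 (d : ℕ) (F : Fiberization d)
    (V : Submodule ℂ (H2 d)) [CompleteSpace V]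
    (hVinv : ∀ (k : Fin d → ℤ) (f : H2 d), f ∈ V → F.Tr k f ∈ V)
    (hVgen : ∃ (N : ℕ) (φ : Fin N → H2 d), V = (Submodule.span ℂ
      (Set.range fun p : Fin N × (Fin d → ℤ) => F.Tr p.2 (φ p.1))).topologicalClosure)
    (L : V →L[ℂ] V) (hnormal : IsStarNormal L)
    (hLsp : ∀ (k : Fin d → ℤ) (f g : V), (g : H2 d) = F.Tr k (f : H2 d) →
      ((L g : V) : H2 d) = F.Tr k ((L f : V) : H2 d))
    (a : (Fin d → ℤ) → ℂ) (ha2 : Memℓp a 2)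
    (hbdd : ∃ C : ℝ, ∀ᵐ ω ∂(volume : Measure (Rd d)),
      ‖∑' j : Fin d → ℤ, a j * eChar j ω‖ ≤ C)
    (La : H2 d →L[ℂ] H2 d)
    (hLa : ∀ f : H2 d, HasSum (fun j : Fin d → ℤ => a j • F.Tr j f) (La f))
    (LaV : V →L[ℂ] V) (hLaV : ∀ f : V, ((LaV f : V) : H2 d) = La (f : H2 d))
    (hseig : LinearMap.ker ((L - LaV : V →L[ℂ] V) : V →ₗ[ℂ] V) ≠ ⊥)
    (Lb : H2 d →L[ℂ] H2 d)
    (hLb : ∀ f : H2 d,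
      HasSum (fun j : Fin d → ℤ => (starRingEnd ℂ) (a (-j)) • F.Tr j f) (Lb f))
    (LbV : V →L[ℂ] V) (hLbV : ∀ f : V, ((LbV f : V) : H2 d) = Lb (f : H2 d)) :
    LinearMap.ker ((ContinuousLinearMap.adjoint L - LbV : V →L[ℂ] V) : V →ₗ[ℂ] V) =
      LinearMap.ker ((L - LaV : V →L[ℂ] V) : V →ₗ[ℂ] V) ∧
      LinearMap.ker ((ContinuousLinearMap.adjoint L - LbV : V →L[ℂ] V) : V →ₗ[ℂ] V) ≠ ⊥ :=
  stmt13_general d F V hVinv L hnormal hLsp a La hLa LaV hLaV hseig Lb hLb LbV hLbV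
end
end

section
/- Let V ⊆ L²(ℝ^d) be a shift-invariant space with measurable range function J, and let P_V denote the orthogonal projection of L²(ℝ^d) onto V. Then for every f ∈ L²(ℝ^d), T(P_V f)(ω) = P_{J(ω)}(Tf(ω)) for almost every ω ∈ [0,1)^d, where P_{J(ω)} is the orthogonal projection of ℓ²(ℤ^d) onto J(ω). -/
open MeasureTheory
open scoped FourierTransform InnerProductSpace

noncomputable section

/-! The candidate `g(ω) = P_{J(ω)}(Tf(ω))` is strongly measurable (weak measurability suffices,
by expanding in a countable Hilbert basis) and square integrable, so `T⁻¹g` lies in `V`. Since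
`Tf(ω) - g(ω) ⊥ J(ω)` pointwise, integrating shows `f - T⁻¹g ⊥ V`, hence `P_V f = T⁻¹g`. -/

section

variable {𝕜 : Type*} [RCLike 𝕜] {E : Type*} [NormedAddCommGroup E] [InnerProductSpace 𝕜 E]
  {X : Type*} [MeasurableSpace X]

theorem HilbertBasis.stronglyMeasurable_of_measurable_inner {ι : Type*} [Countable ι]
    (b : HilbertBasis ι 𝕜 E) {f : X → E} (hf : ∀ i, Measurable fun x => ⟪b i, f x⟫_𝕜) :
    StronglyMeasurable f := by
  have hpartial : ∀ s : Finset ι, StronglyMeasurable fun x => ∑ i ∈ s, ⟪b i, f x⟫_𝕜 • b i :=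
    fun s => Finset.stronglyMeasurable_fun_sum s fun i _ =>
      (hf i).stronglyMeasurable.smul stronglyMeasurable_const
  refine stronglyMeasurable_of_tendsto Filter.atTop hpartial (tendsto_pi_nhds.2 fun x => ?_)
  have hsum : HasSum (fun i => ⟪b i, f x⟫_𝕜 • b i) (f x) := by
    simpa only [b.repr_apply_apply] using b.hasSum_repr (f x)
  exact hsum

/-- The paper's measurable range function: `x ↦ P_{K x}` is weakly measurable. -/
def MeasurableRangeFunction (K : X → Submodule 𝕜 E) [∀ x, (K x).HasOrthogonalProjection] :
    Prop :=
  ∀ u v : E, Measurable fun x => ⟪(K x).starProjection u, v⟫_𝕜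

namespace MeasurableRangeFunction

variable {K : X → Submodule 𝕜 E} [∀ x, (K x).HasOrthogonalProjection]
  {ι : Type*} [Countable ι]

theorem stronglyMeasurable_starProjection (hK : MeasurableRangeFunction K)
    (b : HilbertBasis ι 𝕜 E) (u : E) :
    StronglyMeasurable fun x => (K x).starProjection u :=
  b.stronglyMeasurable_of_measurable_inner fun i => by
    simpa only [← Submodule.inner_starProjection_left_eq_right] using hK (b i) u

theorem stronglyMeasurable_starProjection_apply (hK : MeasurableRangeFunction K)
    (b : HilbertBasis ι 𝕜 E) {H : X → E} (hH : StronglyMeasurable H) :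
    StronglyMeasurable fun x => (K x).starProjection (H x) :=
  b.stronglyMeasurable_of_measurable_inner fun i => by
    simpa only [Submodule.inner_starProjection_left_eq_right] using
      ((hK.stronglyMeasurable_starProjection b (b i)).inner (𝕜 := 𝕜) hH).measurable

theorem memLp_starProjection_apply (hK : MeasurableRangeFunction K) (b : HilbertBasis ι 𝕜 E)
    {μ : Measure X} {F : X → E} (hF : MemLp F 2 μ) :
    MemLp (fun x => (K x).starProjection (F x)) 2 μ := by
  have hmeas : AEStronglyMeasurable (fun x => (K x).starProjection (F x)) μ :=
    ⟨_, hK.stronglyMeasurable_starProjection_apply b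
        hF.aestronglyMeasurable.stronglyMeasurable_mk,
      hF.aestronglyMeasurable.ae_eq_mk.mono fun x hx => congrArg (K x).starProjection hx⟩
  exact hF.of_le hmeas (ae_of_all _ fun x => (K x).norm_starProjection_apply_le (F x))

end MeasurableRangeFunction

theorem LinearIsometryEquiv.starProjection_ae_eq_starProjection_apply
    {H : Type*} [NormedAddCommGroup H] [InnerProductSpace 𝕜 H] {μ : Measure X}
    (Φ : H ≃ₗᵢ[𝕜] Lp E 2 μ) {K : X → Submodule 𝕜 E} [∀ x, (K x).HasOrthogonalProjection]
    (hK : MeasurableRangeFunction K) {ι : Type*} [Countable ι] (b : HilbertBasis ι 𝕜 E)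
    (V : Submodule 𝕜 H) [V.HasOrthogonalProjection]
    (hV : ∀ f, f ∈ V ↔ ∀ᵐ x ∂μ, Φ f x ∈ K x) (f : H) :
    Φ (V.starProjection f) =ᵐ[μ] fun x => (K x).starProjection (Φ f x) := by
  set g : Lp E 2 μ := (hK.memLp_starProjection_apply b (Lp.memLp (Φ f))).toLp _
  have hg : g =ᵐ[μ] fun x => (K x).starProjection (Φ f x) := MemLp.coeFn_toLp _
  suffices V.starProjection f = Φ.symm g by rwa [this, Φ.apply_symm_apply]
  refine Submodule.eq_starProjection_of_mem_of_inner_eq_zero ?_ fun h hh => ?_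
  · rw [hV, Φ.apply_symm_apply]
    filter_upwards [hg] with x hx
    rw [hx]
    exact (K x).starProjection_apply_mem _
  · rw [← Φ.inner_map_map, map_sub, Φ.apply_symm_apply, L2.inner_def]
    refine integral_eq_zero_of_ae ?_
    filter_upwards [Lp.coeFn_sub (Φ f) g, hg, (hV h).1 hh] with x hsub hgx hhx
    rw [hsub, Pi.sub_apply, hgx]
    exact (Submodule.mem_orthogonal' _ _).1 ((K x).sub_starProjection_mem_orthogonal _) _ hhx

end

open scoped InnerProductSpace in
theorem stmt19_general (d : ℕ) (F : Fiberization d)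
    (J : Rd d → Submodule ℂ (l2Z d)) [∀ ω, CompleteSpace (J ω)]
    (hJmeas : ∀ u v : l2Z d,
      Measurable fun ω : Rd d => ⟪((Submodule.orthogonalProjection (J ω) u : J ω) : l2Z d), v⟫_ℂ)
    (V : Submodule ℂ (H2 d)) [CompleteSpace V]
    (hVJ : ∀ f : H2 d, f ∈ V ↔ ∀ᵐ ω ∂(boxMeasure d), (F.T f : Rd d → l2Z d) ω ∈ J ω) :
    ∀ f : H2 d, ∀ᵐ ω ∂(boxMeasure d),
      (F.T (((Submodule.orthogonalProjection V f : V) : H2 d)) : Rd d → l2Z d) ω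
        = ((Submodule.orthogonalProjection (J ω) ((F.T f : Rd d → l2Z d) ω) : J ω) : l2Z d) :=
  F.T.starProjection_ae_eq_starProjection_apply hJmeas
    (HilbertBasis.ofRepr (LinearIsometryEquiv.refl ℂ (l2Z d))) V hVJ

open scoped InnerProductSpace in
/-- Helson's lemma. Let `V ⊆ L²(ℝ^d)` be a shift-invariant space with
measurable range function `J` and `P_V` the orthogonal projection onto `V`.  Then for every
`f ∈ L²(ℝ^d)`, `𝒯(P_V f)(ω) = P_{J(ω)}(𝒯f(ω))` for a.e. `ω ∈ [0,1)^d`. -/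
theorem stmt19 (d : ℕ) (F : Fiberization d)
    (J : Rd d → Submodule ℂ (l2Z d)) [∀ ω, CompleteSpace (J ω)]
    (hJmeas : ∀ u v : l2Z d,
      Measurable fun ω : Rd d => ⟪((Submodule.orthogonalProjection (J ω) u : J ω) : l2Z d), v⟫_ℂ)
    (V : Submodule ℂ (H2 d)) [CompleteSpace V]
    (hVinv : ∀ (k : Fin d → ℤ) (f : H2 d), f ∈ V → F.Tr k f ∈ V)
    (hVJ : ∀ f : H2 d, f ∈ V ↔ ∀ᵐ ω ∂(boxMeasure d), (F.T f : Rd d → l2Z d) ω ∈ J ω) :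
    ∀ f : H2 d, ∀ᵐ ω ∂(boxMeasure d),
      (F.T (((Submodule.orthogonalProjection V f : V) : H2 d)) : Rd d → l2Z d) ω
        = ((Submodule.orthogonalProjection (J ω) ((F.T f : Rd d → l2Z d) ω) : J ω) : l2Z d) :=
  stmt19_general d F J hJmeas V hVJ

end
end
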